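/- Let G be a finite graph, let θ ≥ 1 be an integer, and let 𝒯 be a tangle of order θ in G. Let Z ⊆ V(G) with |Z| < θ, and let 𝒯∖Z be the set of all separations (A′, B′) of G∖Z of order less than θ − |Z| such that there exists (A, B) ∈ 𝒯 with Z ⊆ V(A ∩ B), A∖Z = A′ and B∖Z = B′. Then 𝒯∖Z is a tangle of order θ − |Z| in the graph G∖Z. -/

import Mathlib

open scoped Classical

/-- A finite graph (no loops, no parallel edges), given by a finite vertex set and a
finite set of edges, each edge being an unordered pair of distinct vertices. -/
structure FinGraph (V : Type*) where
  verts : Finset V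
  edges : Finset (Sym2 V)
  edge_sub : ∀ e ∈ edges, ∀ v ∈ e, v ∈ verts
  no_loops : ∀ e ∈ edges, ¬ e.IsDiag

namespace FinGraph

variable {V : Type*}

/-- The union of two graphs. -/
def union [DecidableEq V] (A B : FinGraph V) : FinGraph V where
  verts := A.verts ∪ B.verts
  edges := A.edges ∪ B.edges
  edge_sub := by
    intro e he v hv
    rcases Finset.mem_union.1 he with h | h
    · exact Finset.mem_union_left _ (A.edge_sub e h v hv)
    · exact Finset.mem_union_right _ (B.edge_sub e h v hv)
  no_loops := by
    intro e he
    rcases Finset.mem_union.1 he with h | h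
    · exact A.no_loops e h
    · exact B.no_loops e h

/-- `A` is a subgraph of `G`. -/
def IsSubgraph (A G : FinGraph V) : Prop :=
  A.verts ⊆ G.verts ∧ A.edges ⊆ G.edges

/-- `(A, B)` is a separation of `G`: a pair of subgraphs with `A ∪ B = G` and
`E(A ∩ B) = ∅`. -/
def IsSeparation [DecidableEq V] (G A B : FinGraph V) : Prop :=
  A.IsSubgraph G ∧ B.IsSubgraph G ∧ A.union B = G ∧ A.edges ∩ B.edges = ∅

/-- The order of a separation `(A, B)` is `|V(A ∩ B)| = |V(A) ∩ V(B)|`. -/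
def sepOrder [DecidableEq V] (A B : FinGraph V) : ℕ := (A.verts ∩ B.verts).card

/-- The graph `G∖Z` obtained from `G` by deleting the vertices in `Z` (and all edges
meeting `Z`). -/
noncomputable def del (G : FinGraph V) (Z : Finset V) : FinGraph V where
  verts := G.verts \ Z
  edges := G.edges.filter fun e => ∀ v ∈ e, v ∉ Z
  edge_sub := by
    intro e he v hv
    rw [Finset.mem_filter] at he
    exact Finset.mem_sdiff.2 ⟨G.edge_sub e he.1 v hv, he.2 v hv⟩
  no_loops := by
    intro e he
    rw [Finset.mem_filter] at he
    exact G.no_loops e he.1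

/-- A tangle of order `θ` (where `θ ≥ 1`) in `G`: a set `T` of separations of `G`, all of
order `< θ`, such that (1) for every separation `(A, B)` of order `< θ`, one of `(A, B)`,
`(B, A)` belongs to `T`; (2) if `(A₁,B₁), (A₂,B₂), (A₃,B₃) ∈ T` then `A₁ ∪ A₂ ∪ A₃ ≠ G`;
and (3) if `(A, B) ∈ T` then `V(A) ≠ V(G)`. -/
def IsTangle [DecidableEq V] (G : FinGraph V) (θ : ℕ)
    (T : Set (FinGraph V × FinGraph V)) : Prop :=
  1 ≤ θ ∧
  (∀ p ∈ T, IsSeparation G p.1 p.2 ∧ sepOrder p.1 p.2 < θ) ∧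
  (∀ A B : FinGraph V, IsSeparation G A B → sepOrder A B < θ →
    (A, B) ∈ T ∨ (B, A) ∈ T) ∧
  (∀ p₁ ∈ T, ∀ p₂ ∈ T, ∀ p₃ ∈ T, (p₁.1).union ((p₂.1).union p₃.1) ≠ G) ∧
  (∀ p ∈ T, p.1.verts ≠ G.verts)

end FinGraph

open FinGraph

/-!
Every separation `(A', B')` of `G∖Z` lifts to a separation of `G` of order `|V(A' ∩ B')| + |Z|`:
put `Z` on both sides, give `A'` every edge at `Z` whose other end lies in `V(A') ∪ Z`, and give
`B'` the remaining edges at `Z`. Orienting the lift by `𝒯` orients `(A', B')`. For the covering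
axiom, one first observes that membership in a tangle only depends on the vertex sets of the two
sides: if `(A, B) ∈ 𝒯` and `(B', A') ∈ 𝒯` with the same vertex sets, then `A`, `B'` and the
induced subgraph on `V(A ∩ B)` (a small side of `𝒯`) cover `G`. Hence each `(A, B) ∈ 𝒯` with
`Z ⊆ V(A ∩ B)` may be replaced by the lift of `(A∖Z, B∖Z)`, and lifting the first side commutes
with unions, so three first sides covering `G∖Z` would lift to three first sides covering `G`.
-/

open Finset

theorem Sym2.forall_or_forall_of_mem {α : Type*} {e : Sym2 α} {P Q : α → Prop} {z : α}
    (hz : z ∈ e) (hPz : P z) (hQz : Q z) (h : ∀ v ∈ e, P v ∨ Q v) :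
    (∀ v ∈ e, P v) ∨ ∀ v ∈ e, Q v := by
  obtain ⟨w, rfl⟩ := Sym2.mem_iff_exists.1 hz
  simp only [Sym2.forall_mem_pair]
  rcases h w (Sym2.mem_mk_right z w) with hw | hw
  · exact Or.inl ⟨hPz, hw⟩
  · exact Or.inr ⟨hQz, hw⟩

namespace FinGraph

variable {V : Type*}

@[ext]
theorem ext {A B : FinGraph V} (hv : A.verts = B.verts) (he : A.edges = B.edges) : A = B := by
  cases A; cases B; simp_all

theorem mem_del_verts {G : FinGraph V} {Z : Finset V} {v : V} :
    v ∈ (G.del Z).verts ↔ v ∈ G.verts ∧ v ∉ Z :=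
  mem_sdiff

theorem mem_del_edges {G : FinGraph V} {Z : Finset V} {e : Sym2 V} :
    e ∈ (G.del Z).edges ↔ e ∈ G.edges ∧ ∀ v ∈ e, v ∉ Z :=
  mem_filter

theorem IsSubgraph.of_del {G A : FinGraph V} {Z : Finset V} (h : A.IsSubgraph (G.del Z)) :
    A.IsSubgraph G :=
  ⟨fun _ hv => (mem_del_verts.1 (h.1 hv)).1, fun _ he => (mem_del_edges.1 (h.2 he)).1⟩

noncomputable def subgraphOn (G : FinGraph V) (U : Finset V) (P : Sym2 V → Prop) : FinGraph V where
  verts := U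
  edges := G.edges.filter fun e => P e ∧ ∀ v ∈ e, v ∈ U
  edge_sub := fun _ he => (mem_filter.1 he).2.2
  no_loops := fun e he => G.no_loops e (mem_filter.1 he).1

@[simp]
theorem subgraphOn_verts (G : FinGraph V) (U : Finset V) (P : Sym2 V → Prop) :
    (G.subgraphOn U P).verts = U :=
  rfl

@[simp]
theorem mem_subgraphOn_edges {G : FinGraph V} {U : Finset V} {P : Sym2 V → Prop} {e : Sym2 V} :
    e ∈ (G.subgraphOn U P).edges ↔ e ∈ G.edges ∧ P e ∧ ∀ v ∈ e, v ∈ U :=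
  mem_filter

section DecidableEq

variable [DecidableEq V]

@[simp]
theorem union_verts (A B : FinGraph V) : (A.union B).verts = A.verts ∪ B.verts :=
  rfl

@[simp]
theorem union_edges (A B : FinGraph V) : (A.union B).edges = A.edges ∪ B.edges :=
  rfl

theorem del_verts_union_of_subset {A : FinGraph V} {Z : Finset V} (hZ : Z ⊆ A.verts) :
    (A.del Z).verts ∪ Z = A.verts := by
  ext v
  have := @hZ v
  simp only [mem_union, mem_del_verts]
  tauto

theorem isSeparation_iff {G A B : FinGraph V} :
    IsSeparation G A B ↔
      A.verts ∪ B.verts = G.verts ∧ A.edges ∪ B.edges = G.edges ∧ Disjoint A.edges B.edges := by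
  rw [disjoint_iff_inter_eq_empty]
  constructor
  · rintro ⟨-, -, h, hd⟩
    exact ⟨congrArg verts h, congrArg edges h, hd⟩
  · rintro ⟨hv, he, hd⟩
    exact ⟨⟨hv ▸ subset_union_left, he ▸ subset_union_left⟩,
      ⟨hv ▸ subset_union_right, he ▸ subset_union_right⟩, ext hv he, hd⟩

theorem IsSeparation.symm {G A B : FinGraph V} (h : IsSeparation G A B) : IsSeparation G B A := by
  rw [isSeparation_iff] at h ⊢
  obtain ⟨hv, he, hd⟩ := h
  exact ⟨by rwa [union_comm], by rwa [union_comm], hd.symm⟩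

theorem sepOrder_comm (A B : FinGraph V) : sepOrder A B = sepOrder B A := by
  rw [sepOrder, sepOrder, inter_comm]

theorem IsSeparation.del {G A B : FinGraph V} (h : IsSeparation G A B) (Z : Finset V) :
    IsSeparation (G.del Z) (A.del Z) (B.del Z) := by
  rw [isSeparation_iff] at h ⊢
  obtain ⟨hv, he, hd⟩ := h
  refine ⟨?_, ?_, ?_⟩
  · ext v
    simp only [mem_union, mem_del_verts, ← hv]
    tauto
  · ext e
    simp only [mem_union, mem_del_edges, ← he]
    tauto
  · exact disjoint_left.2 fun e hA hB =>
      disjoint_left.1 hd (mem_del_edges.1 hA).1 (mem_del_edges.1 hB).1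

noncomputable def liftFst (G : FinGraph V) (Z : Finset V) (A : FinGraph V) : FinGraph V :=
  G.subgraphOn (A.verts ∪ Z) fun e => e ∈ A.edges ∨ ∃ z ∈ e, z ∈ Z

noncomputable def liftSnd (G : FinGraph V) (Z : Finset V) (A B : FinGraph V) : FinGraph V :=
  G.subgraphOn (B.verts ∪ Z) fun e => e ∉ (G.liftFst Z A).edges

section Lift

variable {G : FinGraph V} {Z : Finset V}

theorem liftFst_verts (A : FinGraph V) : (G.liftFst Z A).verts = A.verts ∪ Z :=
  rfl

theorem liftSnd_verts (A B : FinGraph V) : (G.liftSnd Z A B).verts = B.verts ∪ Z :=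
  rfl

theorem mem_liftFst_edges {A : FinGraph V} {e : Sym2 V} :
    e ∈ (G.liftFst Z A).edges ↔
      e ∈ G.edges ∧ (e ∈ A.edges ∨ ∃ z ∈ e, z ∈ Z) ∧ ∀ v ∈ e, v ∈ A.verts ∪ Z :=
  mem_subgraphOn_edges

theorem mem_liftSnd_edges {A B : FinGraph V} {e : Sym2 V} :
    e ∈ (G.liftSnd Z A B).edges ↔
      e ∈ G.edges ∧ e ∉ (G.liftFst Z A).edges ∧ ∀ v ∈ e, v ∈ B.verts ∪ Z :=
  mem_subgraphOn_edges

theorem edges_subset_liftFst {A : FinGraph V} (hA : A.edges ⊆ G.edges) :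
    A.edges ⊆ (G.liftFst Z A).edges := fun e he =>
  mem_liftFst_edges.2 ⟨hA he, Or.inl he, fun v hv => mem_union_left _ (A.edge_sub e he v hv)⟩

theorem liftFst_union (A B : FinGraph V) :
    G.liftFst Z (A.union B) = (G.liftFst Z A).union (G.liftFst Z B) := by
  refine ext ?_ ?_
  · ext v
    simp only [liftFst_verts, union_verts, mem_union]
    tauto
  · ext e
    simp only [mem_liftFst_edges, union_edges, union_verts, mem_union]
    constructor
    · rintro ⟨heG, (hA | hB) | ⟨z, hz, hzZ⟩, hends⟩
      · exact Or.inl ⟨heG, Or.inl hA, fun v hv => Or.inl (A.edge_sub e hA v hv)⟩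
      · exact Or.inr ⟨heG, Or.inl hB, fun v hv => Or.inl (B.edge_sub e hB v hv)⟩
      · refine (Sym2.forall_or_forall_of_mem hz (Or.inr hzZ) (Or.inr hzZ) fun v hv => ?_).imp
          (fun h => ⟨heG, Or.inr ⟨z, hz, hzZ⟩, h⟩) (fun h => ⟨heG, Or.inr ⟨z, hz, hzZ⟩, h⟩)
        have := hends v hv
        tauto
    · rintro (⟨heG, hA, hends⟩ | ⟨heG, hB, hends⟩)
      · exact ⟨heG, by tauto, fun v hv => by have := hends v hv; tauto⟩
      · exact ⟨heG, by tauto, fun v hv => by have := hends v hv; tauto⟩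

theorem liftFst_del_self (hZG : Z ⊆ G.verts) : G.liftFst Z (G.del Z) = G := by
  refine ext (del_verts_union_of_subset hZG) ?_
  ext e
  simp only [mem_liftFst_edges, mem_del_edges, mem_union, mem_del_verts]
  refine ⟨fun h => h.1, fun heG => ⟨heG, ?_, fun v hv => ?_⟩⟩
  · by_cases h : ∃ z ∈ e, z ∈ Z
    · exact Or.inr h
    · push Not at h
      exact Or.inl ⟨heG, h⟩
  · have := G.edge_sub e heG v hv
    tauto

theorem liftFst_del {A : FinGraph V} (hA : A.IsSubgraph (G.del Z)) : (G.liftFst Z A).del Z = A := by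
  refine ext ?_ ?_
  · ext v
    have hvZ := fun hv : v ∈ A.verts => (mem_del_verts.1 (hA.1 hv)).2
    simp only [mem_del_verts, liftFst_verts, mem_union]
    tauto
  · ext e
    refine ⟨fun he => ?_, fun he => mem_del_edges.2
      ⟨edges_subset_liftFst hA.of_del.2 he, (mem_del_edges.1 (hA.2 he)).2⟩⟩
    obtain ⟨he, heZ⟩ := mem_del_edges.1 he
    obtain ⟨-, hAe | ⟨z, hz, hzZ⟩, -⟩ := mem_liftFst_edges.1 he
    · exact hAe
    · exact absurd hzZ (heZ z hz)

theorem liftSnd_del {A B : FinGraph V} (hsep : IsSeparation (G.del Z) A B) :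
    (G.liftSnd Z A B).del Z = B := by
  have hsub := hsep.1.of_del
  rw [isSeparation_iff] at hsep
  refine ext ?_ ?_
  · ext v
    have hvZ := fun hv : v ∈ B.verts => (mem_del_verts.1 (hsep.1 ▸ mem_union_right _ hv)).2
    simp only [mem_del_verts, liftSnd_verts, mem_union]
    tauto
  · ext e
    simp only [mem_del_edges, mem_liftSnd_edges]
    constructor
    · rintro ⟨⟨heG, hnA, -⟩, heZ⟩
      have hAB : e ∈ A.edges ∪ B.edges := hsep.2.1 ▸ mem_del_edges.2 ⟨heG, heZ⟩
      exact (mem_union.1 hAB).resolve_left fun hA => hnA (edges_subset_liftFst hsub.2 hA)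
    · intro he
      obtain ⟨heG, heZ⟩ := mem_del_edges.1 (hsep.2.1 ▸ mem_union_right _ he)
      refine ⟨⟨heG, fun hA => ?_, fun v hv => mem_union_left _ (B.edge_sub e he v hv)⟩, heZ⟩
      rcases (mem_liftFst_edges.1 hA).2.1 with hAe | ⟨z, hz, hzZ⟩
      · exact disjoint_left.1 hsep.2.2 hAe he
      · exact heZ z hz hzZ

theorem isSeparation_lift (hZG : Z ⊆ G.verts) {A B : FinGraph V}
    (hsep : IsSeparation (G.del Z) A B) :
    IsSeparation G (G.liftFst Z A) (G.liftSnd Z A B) := by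
  have hA := hsep.1.of_del
  rw [isSeparation_iff] at hsep ⊢
  obtain ⟨hv, he, -⟩ := hsep
  have hverts : A.verts ∪ Z ∪ (B.verts ∪ Z) = G.verts := by
    rw [← union_union_distrib_right, hv, del_verts_union_of_subset hZG]
  have hcover : ∀ v ∈ G.verts, v ∈ A.verts ∪ Z ∨ v ∈ B.verts ∪ Z := fun v hvG =>
    mem_union.1 (hverts ▸ hvG)
  refine ⟨hverts, ?_, disjoint_left.2 fun e hA hB => (mem_liftSnd_edges.1 hB).2.1 hA⟩
  · ext e
    refine ⟨fun h => ?_, fun heG => ?_⟩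
    · rcases mem_union.1 h with h | h <;> exact (mem_subgraphOn_edges.1 h).1
    by_cases hAe : e ∈ (G.liftFst Z A).edges
    · exact mem_union_left _ hAe
    refine mem_union_right _ (mem_liftSnd_edges.2 ⟨heG, hAe, ?_⟩)
    by_cases heZ : ∃ z ∈ e, z ∈ Z
    · obtain ⟨z, hz, hzZ⟩ := heZ
      refine (Sym2.forall_or_forall_of_mem hz (mem_union_right _ hzZ) (mem_union_right _ hzZ)
        fun v hv => hcover v (G.edge_sub e heG v hv)).resolve_left fun h => hAe ?_
      exact mem_liftFst_edges.2 ⟨heG, Or.inr ⟨z, hz, hzZ⟩, h⟩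
    · push Not at heZ
      have hAB : e ∈ A.edges ∪ B.edges := he ▸ mem_del_edges.2 ⟨heG, heZ⟩
      have hBe : e ∈ B.edges :=
        (mem_union.1 hAB).resolve_left fun h => hAe (edges_subset_liftFst hA.2 h)
      exact fun v hv => mem_union_left _ (B.edge_sub e hBe v hv)

theorem sepOrder_lift {A B : FinGraph V} (hsep : IsSeparation (G.del Z) A B) :
    sepOrder (G.liftFst Z A) (G.liftSnd Z A B) = sepOrder A B + Z.card := by
  have hdisj : Disjoint (A.verts ∩ B.verts) Z :=
    disjoint_left.2 fun v hv => (mem_del_verts.1 (hsep.1.1 (mem_inter.1 hv).1)).2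
  rw [sepOrder, sepOrder, ← card_union_of_disjoint hdisj]
  congr 1
  ext v
  simp only [liftFst_verts, liftSnd_verts, mem_union, mem_inter]
  tauto

end Lift

section Tangle

variable {G : FinGraph V} {θ : ℕ} {T : Set (FinGraph V × FinGraph V)}

theorem IsTangle.induce_mem (hT : IsTangle G θ T) {X : Finset V} (hXG : X ⊆ G.verts)
    (hX : X.card < θ) :
    (G.subgraphOn X fun _ => True, G.subgraphOn G.verts fun e => ¬ ∀ v ∈ e, v ∈ X) ∈ T := by
  obtain ⟨-, -, horient, -, hproper⟩ := hT
  have hsep : IsSeparation G (G.subgraphOn X fun _ => True)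
      (G.subgraphOn G.verts fun e => ¬ ∀ v ∈ e, v ∈ X) := by
    rw [isSeparation_iff]
    refine ⟨union_eq_right.2 hXG, ?_, ?_⟩
    · ext e
      simp only [mem_union, mem_subgraphOn_edges, true_and]
      have := G.edge_sub e
      tauto
    · exact disjoint_left.2 fun e hK hL =>
        (mem_subgraphOn_edges.1 hL).2.1 (mem_subgraphOn_edges.1 hK).2.2
  have hord : sepOrder (G.subgraphOn X fun _ => True)
      (G.subgraphOn G.verts fun e => ¬ ∀ v ∈ e, v ∈ X) < θ := by
    rwa [sepOrder, subgraphOn_verts, subgraphOn_verts, inter_eq_left.2 hXG]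
  exact (horient _ _ hsep hord).resolve_right fun h => hproper _ h rfl

theorem IsTangle.mem_of_verts_eq (hT : IsTangle G θ T) {A B A' B' : FinGraph V}
    (hAB : (A, B) ∈ T) (hsep : IsSeparation G A' B') (hA : A'.verts = A.verts)
    (hB : B'.verts = B.verts) : (A', B') ∈ T := by
  obtain ⟨-, hmem, horient, hcover, -⟩ := id hT
  obtain ⟨hsepAB, hord⟩ := hmem _ hAB
  have hord' : sepOrder A' B' < θ := by rwa [sepOrder, hA, hB]
  refine (horient _ _ hsep hord').resolve_right fun hswap => ?_
  have hXG : A.verts ∩ B.verts ⊆ G.verts := inter_subset_left.trans hsepAB.1.1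
  refine hcover _ hAB _ hswap _ (hT.induce_mem hXG hord) (ext ?_ ?_)
  · rw [isSeparation_iff] at hsepAB
    ext v
    simp only [union_verts, subgraphOn_verts, mem_union, mem_inter, hB, ← hsepAB.1]
    tauto
  · rw [isSeparation_iff] at hsepAB hsep
    ext e
    simp only [union_edges, mem_union, mem_subgraphOn_edges, true_and]
    refine ⟨?_, fun heG => ?_⟩
    · rintro (h | h | h)
      · exact hsepAB.2.1 ▸ mem_union_left _ h
      · exact hsep.2.1 ▸ mem_union_right _ h
      · exact h.1
    by_cases hB' : e ∈ B'.edges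
    · exact Or.inr (Or.inl hB')
    rcases mem_union.1 (hsepAB.2.1 ▸ heG) with hAe | hBe
    · exact Or.inl hAe
    -- an edge that moved from `B` to `A'` has both ends in `V(A') ∩ V(B) = V(A) ∩ V(B)`
    have hA'e : e ∈ A'.edges := (mem_union.1 (hsep.2.1 ▸ heG)).resolve_right hB'
    exact Or.inr (Or.inr ⟨heG, fun v hv =>
      mem_inter.2 ⟨hA ▸ A'.edge_sub e hA'e v hv, B.edge_sub e hBe v hv⟩⟩)

theorem IsTangle.lift_mem (hT : IsTangle G θ T) {Z : Finset V} {A B : FinGraph V}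
    (hAB : (A, B) ∈ T) (hZ : Z ⊆ A.verts ∩ B.verts) :
    (G.liftFst Z (A.del Z), G.liftSnd Z (A.del Z) (B.del Z)) ∈ T := by
  have hsep := (hT.2.1 _ hAB).1
  have hZA := hZ.trans inter_subset_left
  exact hT.mem_of_verts_eq hAB (isSeparation_lift (hZA.trans hsep.1.1) (hsep.del Z))
    (del_verts_union_of_subset hZA) (del_verts_union_of_subset (hZ.trans inter_subset_right))

end Tangle

end DecidableEq

end FinGraph

open FinGraph

theorem tangle_deleteVerts_general {V : Type*} [DecidableEq V]
    (G : FinGraph V) (θ : ℕ)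
    (T : Set (FinGraph V × FinGraph V)) (hT : IsTangle G θ T)
    (Z : Finset V) (hZG : Z ⊆ G.verts) (hZθ : Z.card < θ) :
    IsTangle (G.del Z) (θ - Z.card)
      {p : FinGraph V × FinGraph V |
        IsSeparation (G.del Z) p.1 p.2 ∧ sepOrder p.1 p.2 < θ - Z.card ∧
        ∃ q ∈ T, Z ⊆ q.1.verts ∩ q.2.verts ∧
          q.1.del Z = p.1 ∧ q.2.del Z = p.2} := by
  obtain ⟨-, -, horient, hcover, hproper⟩ := id hT
  refine ⟨by omega, fun p hp => ⟨hp.1, hp.2.1⟩, ?_, ?_, ?_⟩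
  · intro A' B' hsep hord
    have hord' : sepOrder (G.liftFst Z A') (G.liftSnd Z A' B') < θ := by
      rw [sepOrder_lift hsep]
      omega
    have hZ : Z ⊆ (G.liftFst Z A').verts ∩ (G.liftSnd Z A' B').verts :=
      subset_inter subset_union_right subset_union_right
    rcases horient _ _ (isSeparation_lift hZG hsep) hord' with h | h
    · exact Or.inl ⟨hsep, hord, _, h, hZ, liftFst_del hsep.1, liftSnd_del hsep⟩
    · exact Or.inr ⟨hsep.symm, by rwa [sepOrder_comm], _, h, by rwa [inter_comm],
        liftSnd_del hsep, liftFst_del hsep.1⟩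
  · rintro ⟨-, -⟩ ⟨-, -, ⟨A₁, B₁⟩, h₁, hZ₁, rfl, rfl⟩ ⟨-, -⟩ ⟨-, -, ⟨A₂, B₂⟩, h₂, hZ₂, rfl, rfl⟩
      ⟨-, -⟩ ⟨-, -, ⟨A₃, B₃⟩, h₃, hZ₃, rfl, rfl⟩ hunion
    refine hcover _ (hT.lift_mem h₁ hZ₁) _ (hT.lift_mem h₂ hZ₂) _ (hT.lift_mem h₃ hZ₃) ?_
    rw [← liftFst_union, ← liftFst_union, hunion, liftFst_del_self hZG]
  · rintro ⟨-, -⟩ ⟨-, -, ⟨A, B⟩, hAB, hZ, rfl, rfl⟩ hV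
    refine hproper _ hAB ?_
    calc A.verts = (A.del Z).verts ∪ Z :=
          (del_verts_union_of_subset (hZ.trans inter_subset_left)).symm
      _ = (G.del Z).verts ∪ Z := congrArg (· ∪ Z) hV
      _ = G.verts := del_verts_union_of_subset hZG

/-- If `T` is a tangle of order `θ` in `G` and `Z ⊆ V(G)` with `|Z| < θ`, then `T∖Z` —
the set of all separations `(A′, B′)` of `G∖Z` of order `< θ − |Z|` such that there exists
`(A, B) ∈ T` with `Z ⊆ V(A ∩ B)`, `A∖Z = A′` and `B∖Z = B′` — is a tangle of order
`θ − |Z|` in `G∖Z`. -/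
theorem tangle_deleteVerts {V : Type*} [DecidableEq V]
    (G : FinGraph V) (θ : ℕ) (hθ : 1 ≤ θ)
    (T : Set (FinGraph V × FinGraph V)) (hT : IsTangle G θ T)
    (Z : Finset V) (hZG : Z ⊆ G.verts) (hZθ : Z.card < θ) :
    IsTangle (G.del Z) (θ - Z.card)
      {p : FinGraph V × FinGraph V |
        IsSeparation (G.del Z) p.1 p.2 ∧ sepOrder p.1 p.2 < θ - Z.card ∧
        ∃ q ∈ T, Z ⊆ q.1.verts ∩ q.2.verts ∧
          q.1.del Z = p.1 ∧ q.2.del Z = p.2} :=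
  tangle_deleteVerts_general G θ T hT Z hZG hZθ
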